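/- arXiv:0804.2940 — 3 statements merged into one kernel-verified Lean document; each statement's English description precedes it below -/
import Mathlib

section
/- Let $\mathcal{F}$ be a two-universal hash family of functions $f : \mathcal{R} \to \mathcal{S}$, let $P$ be a probability distribution on the finite set $\mathcal{R}$, let $\alpha > 0$, and let $A = \{r : P(r) \le 2^{-\alpha}\}$. Define for each $f$ the distribution $P_f(s) = P(f^{-1}(s))$ on $\mathcal{S}$ and let $U$ be the uniform distribution on $\mathcal{S}$. Then $\mathbb{E}_F\big[\sum_{s} |P(f^{-1}(s) \cap A) - P(A)/|\mathcal{S}||\big] \le \sqrt{|\mathcal{S}| \cdot 2^{-\alpha}}$, where $F$ is uniform on $\mathcal{F}$. -/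
open Finset Real

lemma sum_abs_le_sqrt' {ι : Type*} [Fintype ι] (g : ι → ℝ) :
    ∑ i, |g i| ≤ Real.sqrt ((Fintype.card ι : ℝ) * ∑ i, g i ^ 2) := by
  have h1 : (∑ i, |g i|) ^ 2 ≤ (Fintype.card ι : ℝ) * ∑ i, g i ^ 2 := by
    have := sq_sum_le_card_mul_sum_sq (s := (univ : Finset ι)) (f := fun i => |g i|)
    rw [Fintype.card]
    calc (∑ i, |g i|) ^ 2 ≤ (#(univ : Finset ι) : ℝ) * ∑ i, |g i| ^ 2 := this
      _ = _ := by simp [sq_abs]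
  calc ∑ i, |g i| = Real.sqrt ((∑ i, |g i|) ^ 2) := (Real.sqrt_sq (by positivity)).symm
    _ ≤ _ := Real.sqrt_le_sqrt h1

/-- Leftover-hash-lemma core bound on the good set `A = {r | P r ≤ 2^{-α}}`:
the expected ℓ₁ deviation of the hashed restricted distribution from
`P(A)/|S|` is at most `√(|S| · 2^{-α})`. -/
theorem stmt4 {F R S : Type*} [Fintype F] [Nonempty F] [Fintype R] [Fintype S]
    [Nonempty S] [DecidableEq S]
    (h : F → R → S)
    (huniv : ∀ r r' : R, r ≠ r' →
      (({f : F | h f r = h f r'} : Finset F).card : ℝ) / (Fintype.card F : ℝ)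
        ≤ 1 / (Fintype.card S : ℝ))
    (P : R → ℝ) (hP0 : ∀ r, 0 ≤ P r) (hP1 : ∑ r, P r = 1)
    (α : ℝ) (hα : 0 < α)
    (A : Finset R) (hA : ∀ r, r ∈ A ↔ P r ≤ 2 ^ (-α)) :
    (1 / (Fintype.card F : ℝ)) * ∑ f : F, ∑ s : S,
        |(∑ r ∈ {r ∈ A | h f r = s}, P r) -
          (∑ r ∈ A, P r) / (Fintype.card S : ℝ)|
      ≤ Real.sqrt ((Fintype.card S : ℝ) * 2 ^ (-α)) := by
  classical
  set n : ℝ := (Fintype.card S : ℝ) with hn_def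
  set m : ℝ := (Fintype.card F : ℝ) with hm_def
  have hn : 0 < n := by
    have := Fintype.card_pos (α := S); positivity
  have hm : 0 < m := by
    have := Fintype.card_pos (α := F); positivity
  set PA : ℝ := ∑ r ∈ A, P r with hPA_def
  have hPA0 : 0 ≤ PA := Finset.sum_nonneg fun r _ => hP0 r
  have hPA1 : PA ≤ 1 := by
    rw [← hP1]
    exact Finset.sum_le_sum_of_subset_of_nonneg (Finset.subset_univ A)
      (fun r _ _ => hP0 r)
  set Q : F → S → ℝ := fun f s => ∑ r ∈ {r ∈ A | h f r = s}, P r with hQ_def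
  set D : F → ℝ := fun f => ∑ s, (Q f s - PA / n) ^ 2 with hD_def
  have hD0 : ∀ f, 0 ≤ D f := fun f => Finset.sum_nonneg fun s _ => sq_nonneg _
  have hQsum : ∀ f, ∑ s, Q f s = PA := by
    intro f
    exact Finset.sum_fiberwise A (fun r => h f r) P
  -- square-sum identity
  have hsq : ∀ f, ∑ s, Q f s ^ 2
      = ∑ r ∈ A, ∑ r' ∈ A, (if h f r = h f r' then P r * P r' else 0) := by
    intro f
    simp only [hQ_def, Finset.sum_filter, sq, Finset.sum_mul_sum]
    rw [Finset.sum_comm]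
    refine Finset.sum_congr rfl fun r _ => ?_
    rw [Finset.sum_comm]
    refine Finset.sum_congr rfl fun r' _ => ?_
    simp only [ite_mul, mul_ite, zero_mul, mul_zero]
    rw [Finset.sum_ite_eq univ (h f r') (fun s => if h f r = s then P r * P r' else 0)]
    simp [eq_comm]
  -- expansion of D
  have expand : ∀ f, D f = (∑ s, Q f s ^ 2) - PA ^ 2 / n := by
    intro f
    have hrw : ∀ s, (Q f s - PA / n) ^ 2
        = Q f s ^ 2 - (2 * (PA / n)) * Q f s + (PA / n) ^ 2 := fun s => by ring
    simp only [hD_def, hrw]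
    rw [Finset.sum_add_distrib, Finset.sum_sub_distrib, ← Finset.mul_sum,
      hQsum f, Finset.sum_const, Finset.card_univ, nsmul_eq_mul]
    rw [← hn_def]
    field_simp
    ring
  -- key expectation bound
  have key : (1 / m) * ∑ f, D f ≤ 2 ^ (-α) := by
    have swap : ∑ f, ∑ r ∈ A, ∑ r' ∈ A, (if h f r = h f r' then P r * P r' else 0)
        = ∑ r ∈ A, ∑ r' ∈ A,
          ((({f : F | h f r = h f r'} : Finset F).card : ℝ) * (P r * P r')) := by
      rw [Finset.sum_comm]
      refine Finset.sum_congr rfl fun r _ => ?_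
      rw [Finset.sum_comm]
      refine Finset.sum_congr rfl fun r' _ => ?_
      rw [← Finset.sum_filter, Finset.sum_const, nsmul_eq_mul]
    have termbound : ∀ r ∈ A, ∀ r' ∈ A,
        (1 / m) * ((({f : F | h f r = h f r'} : Finset F).card : ℝ) * (P r * P r'))
          ≤ (if r = r' then 2 ^ (-α) * P r else 0) + P r * P r' / n := by
      intro r hr r' hr'
      by_cases hrr : r = r'
      · subst hrr
        rw [if_pos rfl]
        have hc : (({f : F | h f r = h f r} : Finset F).card : ℝ) ≤ m := by
          rw [hm_def]
          exact_mod_cast Finset.card_le_univ _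
        have h1 : (1 / m) * ((({f : F | h f r = h f r} : Finset F).card : ℝ) * (P r * P r))
            ≤ P r * P r := by
          have heq : (1 / m) * ((({f : F | h f r = h f r} : Finset F).card : ℝ) * (P r * P r))
              = ((({f : F | h f r = h f r} : Finset F).card : ℝ) / m) * (P r * P r) := by
            ring
          rw [heq]
          have hcm : (({f : F | h f r = h f r} : Finset F).card : ℝ) / m ≤ 1 :=
            (div_le_one hm).mpr hc
          calc _ ≤ 1 * (P r * P r) :=
                mul_le_mul_of_nonneg_right hcm (mul_nonneg (hP0 r) (hP0 r))
            _ = P r * P r := one_mul _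
        have hPr := (hA r).mp hr
        have h2 : P r * P r ≤ 2 ^ (-α) * P r :=
          mul_le_mul_of_nonneg_right hPr (hP0 r)
        have h3 : 0 ≤ P r * P r / n := div_nonneg (mul_nonneg (hP0 r) (hP0 r)) hn.le
        linarith
      · simp only [if_neg hrr, zero_add]
        have hu := huniv r r' hrr
        rw [div_eq_mul_inv, mul_comm] at hu
        calc (1 / m) * ((({f : F | h f r = h f r'} : Finset F).card : ℝ) * (P r * P r'))
            = ((({f : F | h f r = h f r'} : Finset F).card : ℝ) / m) * (P r * P r') := by
              ring
          _ ≤ (1 / n) * (P r * P r') := by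
              apply mul_le_mul_of_nonneg_right _ (mul_nonneg (hP0 r) (hP0 r'))
              rw [div_eq_mul_inv, mul_comm]
              exact hu
          _ = P r * P r' / n := by ring
    have sumbound : (1 / m) * ∑ f, ∑ r ∈ A, ∑ r' ∈ A,
          (if h f r = h f r' then P r * P r' else 0)
        ≤ 2 ^ (-α) * PA + PA ^ 2 / n := by
      rw [swap, Finset.mul_sum]
      have step : ∑ r ∈ A, (1 / m) * ∑ r' ∈ A,
            ((({f : F | h f r = h f r'} : Finset F).card : ℝ) * (P r * P r'))
          ≤ ∑ r ∈ A, ∑ r' ∈ A,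
            ((if r = r' then 2 ^ (-α) * P r else 0) + P r * P r' / n) := by
        refine Finset.sum_le_sum fun r hr => ?_
        rw [Finset.mul_sum]
        exact Finset.sum_le_sum fun r' hr' => termbound r hr r' hr'
      refine step.trans ?_
      have : ∑ r ∈ A, ∑ r' ∈ A,
            ((if r = r' then 2 ^ (-α) * P r else 0) + P r * P r' / n)
          = 2 ^ (-α) * PA + PA ^ 2 / n := by
        simp only [Finset.sum_add_distrib]
        congr 1
        · have hinner : ∀ r ∈ A, ∑ r' ∈ A, (if r = r' then 2 ^ (-α) * P r else 0)
              = 2 ^ (-α) * P r := by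
            intro r hr
            rw [Finset.sum_ite_eq A r (fun _ => 2 ^ (-α) * P r), if_pos hr]
          rw [Finset.sum_congr rfl hinner, ← Finset.mul_sum]
        · rw [hPA_def, sq, Finset.sum_mul_sum, Finset.sum_div]
          exact Finset.sum_congr rfl fun x _ => (Finset.sum_div _ _ _).symm
      rw [this]
    have : (1 / m) * ∑ f, D f
        = (1 / m) * (∑ f, ∑ r ∈ A, ∑ r' ∈ A, (if h f r = h f r' then P r * P r' else 0))
          - PA ^ 2 / n := by
      have : ∑ f, D f = (∑ f, ∑ r ∈ A, ∑ r' ∈ A,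
          (if h f r = h f r' then P r * P r' else 0)) - m * (PA ^ 2 / n) := by
        calc ∑ f, D f = ∑ f : F, ((∑ r ∈ A, ∑ r' ∈ A,
              (if h f r = h f r' then P r * P r' else 0)) - PA ^ 2 / n) := by
              refine Finset.sum_congr rfl fun f _ => ?_
              rw [expand f, hsq f]
          _ = _ := by
              rw [Finset.sum_sub_distrib, Finset.sum_const, Finset.card_univ, nsmul_eq_mul]
      rw [this]
      field_simp
    rw [this]
    have h2a : 2 ^ (-α) * PA ≤ 2 ^ (-α) := by
      nth_rewrite 2 [← mul_one ((2:ℝ) ^ (-α))]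
      exact mul_le_mul_of_nonneg_left hPA1 (by positivity)
    linarith [sumbound]
  -- assemble
  have step1 : ∀ f, ∑ s, |Q f s - PA / n| ≤ Real.sqrt n * Real.sqrt (D f) := by
    intro f
    have := sum_abs_le_sqrt' (fun s => Q f s - PA / n)
    rw [hn_def]
    calc ∑ s, |Q f s - PA / n| ≤ Real.sqrt ((Fintype.card S : ℝ) * ∑ s, (Q f s - PA / n) ^ 2) := this
      _ = Real.sqrt (Fintype.card S : ℝ) * Real.sqrt (D f) := Real.sqrt_mul (by positivity) _
  have step2 : ∑ f, Real.sqrt (D f) ≤ Real.sqrt (m * ∑ f, D f) := by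
    have := sum_abs_le_sqrt' (fun f => Real.sqrt (D f))
    calc ∑ f, Real.sqrt (D f) = ∑ f, |Real.sqrt (D f)| := by
          refine Finset.sum_congr rfl fun f _ => (abs_of_nonneg (Real.sqrt_nonneg _)).symm
      _ ≤ Real.sqrt ((Fintype.card F : ℝ) * ∑ f, Real.sqrt (D f) ^ 2) := this
      _ = Real.sqrt (m * ∑ f, D f) := by
          rw [hm_def]
          congr 1
          congr 1
          exact Finset.sum_congr rfl fun f _ => Real.sq_sqrt (hD0 f)
  calc (1 / m) * ∑ f : F, ∑ s : S, |Q f s - PA / n|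
      ≤ (1 / m) * ∑ f : F, Real.sqrt n * Real.sqrt (D f) := by
        apply mul_le_mul_of_nonneg_left _ (by positivity)
        exact Finset.sum_le_sum fun f _ => step1 f
    _ = (1 / m) * (Real.sqrt n * ∑ f, Real.sqrt (D f)) := by
        congr 1
        rw [Finset.mul_sum]
    _ ≤ (1 / m) * (Real.sqrt n * Real.sqrt (m * ∑ f, D f)) := by
        apply mul_le_mul_of_nonneg_left _ (by positivity)
        exact mul_le_mul_of_nonneg_left step2 (Real.sqrt_nonneg _)
    _ ≤ (1 / m) * (Real.sqrt n * Real.sqrt (m * (m * 2 ^ (-α)))) := by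
        apply mul_le_mul_of_nonneg_left _ (by positivity)
        apply mul_le_mul_of_nonneg_left _ (Real.sqrt_nonneg _)
        apply Real.sqrt_le_sqrt
        apply mul_le_mul_of_nonneg_left _ hm.le
        rw [one_div] at key
        calc ∑ f, D f = m * (m⁻¹ * ∑ f, D f) := by field_simp
          _ ≤ m * 2 ^ (-α) := mul_le_mul_of_nonneg_left key hm.le
    _ = Real.sqrt (n * 2 ^ (-α)) := by
        rw [show m * (m * 2 ^ (-α)) = m ^ 2 * 2 ^ (-α) by ring,
          Real.sqrt_mul (by positivity), Real.sqrt_sq hm.le,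
          Real.sqrt_mul hn.le]
        field_simp
end

section
/- Let $\mathcal{F}$ be a two-universal hash family of functions $f : \mathcal{R} \to \mathcal{S}$, let $P$ be a probability distribution on the finite set $\mathcal{R}$, and let $\alpha > 0$. Define $\Delta_f = \sum_{s \in \mathcal{S}} |P(f^{-1}(s)) - 1/|\mathcal{S}||$. Then $\mathbb{E}_F[\Delta_F] \le \sqrt{|\mathcal{S}| \cdot 2^{-\alpha}} + 2\, P(\{r : P(r) > 2^{-\alpha}\})$, where $F$ is uniform on $\mathcal{F}$. -/
/-!
Write `P = w + v`, where `w` is `P` on the points of probability at most `2^{-α}` and `v` is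
`P` on `B`. Replacing `P` by `w` changes each `Δ_f` by at most `2 P(B)`. For `w`, Cauchy–Schwarz
over `F × S` bounds the average `ℓ¹` distance from uniform by `√|S|` times the root of the
average squared distance, and two-universality bounds the latter by the collision probability
`∑ w(r)² ≤ 2^{-α}`.
-/

open Finset Real

lemma sum_sub_avg_sq {S : Type*} [Fintype S] [Nonempty S] {x : S → ℝ} {c : ℝ}
    (hx : ∑ s, x s = c) :
    ∑ s, (x s - c / Fintype.card S) ^ 2 = ∑ s, x s ^ 2 - c ^ 2 / Fintype.card S := by
  subst hx
  have hm : (Fintype.card S : ℝ) ≠ 0 := Nat.cast_ne_zero.2 Fintype.card_ne_zero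
  simp only [sub_sq, sum_add_distrib, sum_sub_distrib, ← sum_mul, ← mul_sum, sum_const,
    card_univ, nsmul_eq_mul]
  field_simp
  ring

lemma sum_abs_le_sqrt_card_mul_sum_sq {ι : Type*} [Fintype ι] (y : ι → ℝ) :
    ∑ i, |y i| ≤ √(Fintype.card ι * ∑ i, y i ^ 2) :=
  (le_abs_self _).trans <| abs_le_sqrt <| by
    simpa using sq_sum_le_card_mul_sum_sq (s := univ) (f := fun i => |y i|)

section FiberMass

variable {R S : Type*} [Fintype R] [DecidableEq S]

def fiberMass (g : R → S) (w : R → ℝ) (s : S) : ℝ := ∑ r ∈ {r | g r = s}, w r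

lemma sum_fiberMass [Fintype S] (g : R → S) (w : R → ℝ) :
    ∑ s, fiberMass g w s = ∑ r, w r :=
  sum_fiberwise univ g w

lemma fiberMass_add (g : R → S) (w v : R → ℝ) (s : S) :
    fiberMass g (w + v) s = fiberMass g w s + fiberMass g v s :=
  sum_add_distrib

lemma fiberMass_nonneg (g : R → S) {w : R → ℝ} (hw : 0 ≤ w) (s : S) :
    0 ≤ fiberMass g w s :=
  sum_nonneg fun r _ => hw r

lemma sum_fiberMass_sq [Fintype S] (g : R → S) (w : R → ℝ) :
    ∑ s, fiberMass g w s ^ 2 = ∑ r, ∑ r', if g r = g r' then w r * w r' else 0 := by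
  calc ∑ s, fiberMass g w s ^ 2
      = ∑ s, ∑ r ∈ {r | g r = s}, w r * fiberMass g w (g r) := by
        refine sum_congr rfl fun s _ => ?_
        rw [sq]
        exact (sum_mul {r | g r = s} w (fiberMass g w s)).trans
          (sum_congr rfl fun r hr => by rw [(mem_filter.1 hr).2])
    _ = ∑ r, w r * fiberMass g w (g r) := sum_fiberwise univ g _
    _ = ∑ r, ∑ r', if g r = g r' then w r * w r' else 0 := by
        simp only [fiberMass, mul_sum, sum_filter, mul_ite, mul_zero, eq_comm]

lemma sum_abs_fiberMass_add_sub_le [Fintype S] [Nonempty S] (g : R → S) (w : R → ℝ)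
    {v : R → ℝ} (hv : 0 ≤ v) :
    ∑ s, |fiberMass g (w + v) s - (∑ r, (w + v) r) / Fintype.card S|
      ≤ ∑ s, |fiberMass g w s - (∑ r, w r) / Fintype.card S| + 2 * ∑ r, v r := by
  set m : ℝ := (Fintype.card S : ℝ)
  have hm : 0 < m := Nat.cast_pos.2 Fintype.card_pos
  have hV : 0 ≤ (∑ r, v r) / m := div_nonneg (sum_nonneg fun r _ => hv r) hm.le
  calc ∑ s, |fiberMass g (w + v) s - (∑ r, (w + v) r) / m|
      ≤ ∑ s, (|fiberMass g w s - (∑ r, w r) / m| + (fiberMass g v s + (∑ r, v r) / m)) := by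
        gcongr with s
        have hvs := fiberMass_nonneg g hv s
        rw [fiberMass_add, Pi.add_def, sum_add_distrib, add_div,
          add_sub_add_comm]
        have : |fiberMass g v s - (∑ r, v r) / m| ≤ fiberMass g v s + (∑ r, v r) / m :=
          abs_sub_le_iff.2 ⟨by linarith, by linarith⟩
        exact (abs_add_le _ _).trans (by linarith)
    _ = ∑ s, |fiberMass g w s - (∑ r, w r) / m| + 2 * ∑ r, v r := by
        rw [sum_add_distrib, sum_add_distrib, sum_fiberMass, sum_const, card_univ,
          nsmul_eq_mul, mul_div_cancel₀ _ hm.ne']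
        ring

end FiberMass

section TwoUniversal

variable {F R S : Type*} [Fintype F] [Fintype S] [DecidableEq S]

noncomputable def collisionFreq (h : F → R → S) (r r' : R) : ℝ :=
  (#{f | h f r = h f r'} : ℝ) / Fintype.card F

def IsTwoUniversal (h : F → R → S) : Prop :=
  ∀ r r', r ≠ r' → collisionFreq h r r' ≤ 1 / Fintype.card S

lemma IsTwoUniversal.collisionFreq_le [DecidableEq R] {h : F → R → S} (hu : IsTwoUniversal h)
    (r r' : R) :
    collisionFreq h r r' ≤ (if r = r' then 1 else 0) + 1 / Fintype.card S := by
  by_cases hr : r = r'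
  · rw [if_pos hr]
    have : collisionFreq h r r' ≤ 1 :=
      div_le_one_of_le₀ (Nat.cast_le.2 (card_le_univ _)) (Nat.cast_nonneg _)
    have : (0 : ℝ) ≤ 1 / Fintype.card S := by positivity
    linarith
  · rw [if_neg hr, zero_add]
    exact hu r r' hr

lemma avg_sum_fiberMass_sq [Fintype R] (h : F → R → S) (w : R → ℝ) :
    1 / Fintype.card F * ∑ f, ∑ s, fiberMass (h f) w s ^ 2
      = ∑ r, ∑ r', w r * w r' * collisionFreq h r r' := by
  simp only [sum_fiberMass_sq, mul_sum]
  rw [sum_comm]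
  refine sum_congr rfl fun r _ => ?_
  rw [sum_comm]
  refine sum_congr rfl fun r' _ => ?_
  rw [← mul_sum, ← sum_filter, sum_const, nsmul_eq_mul, collisionFreq]
  ring

lemma IsTwoUniversal.avg_sum_fiberMass_sq_le [Fintype R] {h : F → R → S}
    (hu : IsTwoUniversal h) {w : R → ℝ} (hw : 0 ≤ w) :
    1 / Fintype.card F * ∑ f, ∑ s, fiberMass (h f) w s ^ 2
      ≤ ∑ r, w r ^ 2 + (∑ r, w r) ^ 2 / Fintype.card S := by
  classical
  rw [avg_sum_fiberMass_sq]
  calc ∑ r, ∑ r', w r * w r' * collisionFreq h r r'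
      ≤ ∑ r, ∑ r', w r * w r' * ((if r = r' then 1 else 0) + 1 / Fintype.card S) := by
        gcongr with r _ r' _
        · exact mul_nonneg (hw r) (hw r')
        · exact hu.collisionFreq_le r r'
    _ = ∑ r, w r ^ 2 + (∑ r, w r) ^ 2 / Fintype.card S := by
        simp only [mul_add, sum_add_distrib, mul_ite, mul_one, mul_zero, sum_ite_eq,
          mem_univ, if_true, sq, sum_mul_sum, ← sum_div, mul_one_div]

lemma IsTwoUniversal.avg_sum_fiberMass_sub_sq_le [Fintype R] [Nonempty F] [Nonempty S]
    {h : F → R → S} (hu : IsTwoUniversal h) {w : R → ℝ} (hw : 0 ≤ w) :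
    1 / Fintype.card F * ∑ f, ∑ s, (fiberMass (h f) w s - (∑ r, w r) / Fintype.card S) ^ 2
      ≤ ∑ r, w r ^ 2 := by
  have hn : (Fintype.card F : ℝ) ≠ 0 := Nat.cast_ne_zero.2 Fintype.card_ne_zero
  have := hu.avg_sum_fiberMass_sq_le hw
  rw [sum_congr rfl fun f _ => sum_sub_avg_sq (sum_fiberMass (h f) w), sum_sub_distrib,
    sum_const, card_univ, nsmul_eq_mul, mul_sub, ← mul_assoc, one_div_mul_cancel hn, one_mul]
  linarith

lemma IsTwoUniversal.avg_sum_abs_fiberMass_sub_le [Fintype R] [Nonempty F] [Nonempty S]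
    {h : F → R → S} (hu : IsTwoUniversal h) {w : R → ℝ} (hw : 0 ≤ w) :
    1 / Fintype.card F * ∑ f, ∑ s, |fiberMass (h f) w s - (∑ r, w r) / Fintype.card S|
      ≤ √(Fintype.card S * ∑ r, w r ^ 2) := by
  set n : ℝ := (Fintype.card F : ℝ)
  set y : F × S → ℝ := fun p => fiberMass (h p.1) w p.2 - (∑ r, w r) / Fintype.card S
  have hn : 0 < n := Nat.cast_pos.2 Fintype.card_pos
  calc 1 / n * ∑ f, ∑ s, |y (f, s)|
      ≤ 1 / n * √(n * Fintype.card S * ∑ p, y p ^ 2) := by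
        rw [← Fintype.sum_prod_type (fun p => |y p|)]
        gcongr
        simpa using sum_abs_le_sqrt_card_mul_sum_sq y
    _ = √(Fintype.card S * (1 / n * ∑ f, ∑ s, y (f, s) ^ 2)) := by
        rw [Fintype.sum_prod_type, show n * Fintype.card S * ∑ f, ∑ s, y (f, s) ^ 2
            = n ^ 2 * (Fintype.card S * (1 / n * ∑ f, ∑ s, y (f, s) ^ 2)) by field_simp,
          sqrt_mul (sq_nonneg n), sqrt_sq hn.le]
        field_simp
    _ ≤ √(Fintype.card S * ∑ r, w r ^ 2) := by
        gcongr
        exact hu.avg_sum_fiberMass_sub_sq_le hw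

lemma IsTwoUniversal.avg_sum_abs_fiberMass_add_sub_le [Fintype R] [Nonempty F] [Nonempty S]
    {h : F → R → S} (hu : IsTwoUniversal h) {w v : R → ℝ} (hw : 0 ≤ w) (hv : 0 ≤ v) :
    1 / Fintype.card F *
        ∑ f, ∑ s, |fiberMass (h f) (w + v) s - (∑ r, (w + v) r) / Fintype.card S|
      ≤ √(Fintype.card S * ∑ r, w r ^ 2) + 2 * ∑ r, v r := by
  have hn : (Fintype.card F : ℝ) ≠ 0 := Nat.cast_ne_zero.2 Fintype.card_ne_zero
  calc _ ≤ 1 / Fintype.card F * ∑ f, (∑ s, |fiberMass (h f) w s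
          - (∑ r, w r) / Fintype.card S| + 2 * ∑ r, v r) := by
        gcongr with f; exact sum_abs_fiberMass_add_sub_le (h f) w hv
    _ = 1 / Fintype.card F * ∑ f, ∑ s, |fiberMass (h f) w s
          - (∑ r, w r) / Fintype.card S| + 2 * ∑ r, v r := by
        rw [sum_add_distrib, sum_const, card_univ, nsmul_eq_mul, mul_add, ← mul_assoc,
          one_div_mul_cancel hn, one_mul]
    _ ≤ √(Fintype.card S * ∑ r, w r ^ 2) + 2 * ∑ r, v r := by
        gcongr; exact hu.avg_sum_abs_fiberMass_sub_le hw

end TwoUniversal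

lemma sum_sq_le_mul_sum {R : Type*} [Fintype R] {w : R → ℝ} {c : ℝ} (hw : 0 ≤ w)
    (hc : ∀ r, w r ≤ c) : ∑ r, w r ^ 2 ≤ c * ∑ r, w r := by
  rw [mul_sum]
  exact sum_le_sum fun r _ => by rw [sq]; exact mul_le_mul_of_nonneg_right (hc r) (hw r)

theorem stmt5_general {F R S : Type*} [Fintype F] [Nonempty F] [Fintype R] [Fintype S]
    [Nonempty S] [DecidableEq S]
    (h : F → R → S)
    (huniv : ∀ r r' : R, r ≠ r' →
      (({f : F | h f r = h f r'} : Finset F).card : ℝ) / (Fintype.card F : ℝ)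
        ≤ 1 / (Fintype.card S : ℝ))
    (P : R → ℝ) (hP0 : ∀ r, 0 ≤ P r) (hP1 : ∑ r, P r = 1)
    (α : ℝ)
    (B : Finset R) (hB : ∀ r, r ∈ B ↔ 2 ^ (-α) < P r)
    (Δ : F → ℝ)
    (hΔ : ∀ f, Δ f = ∑ s : S,
      |(∑ r ∈ {r : R | h f r = s}, P r) - 1 / (Fintype.card S : ℝ)|) :
    (1 / (Fintype.card F : ℝ)) * ∑ f : F, Δ f
      ≤ Real.sqrt ((Fintype.card S : ℝ) * 2 ^ (-α)) + 2 * ∑ r ∈ B, P r := by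
  classical
  set w : R → ℝ := fun r => if r ∈ B then 0 else P r
  set v : R → ℝ := fun r => if r ∈ B then P r else 0
  have hw : 0 ≤ w := fun r => by by_cases hr : r ∈ B <;> simp [w, hr, hP0 r]
  have hv : 0 ≤ v := fun r => by by_cases hr : r ∈ B <;> simp [v, hr, hP0 r]
  have hwv : w + v = P := funext fun r => by by_cases hr : r ∈ B <;> simp [w, v, hr]
  have hv_sum : ∑ r, v r = ∑ r ∈ B, P r := by simp [v, sum_ite_mem]
  have hw_le : ∀ r, w r ≤ 2 ^ (-α) := fun r => by
    by_cases hr : r ∈ B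
    · simp only [w, if_pos hr]; positivity
    · simpa [w, hr] using (hB r).not.1 hr
  have hw_sum : ∑ r, w r ≤ 1 := hP1 ▸ sum_le_sum fun r _ => by
    by_cases hr : r ∈ B <;> simp [w, hr, hP0 r]
  have hw_coll : ∑ r, w r ^ 2 ≤ 2 ^ (-α) :=
    (sum_sq_le_mul_sum hw hw_le).trans (mul_le_of_le_one_right (by positivity) hw_sum)
  have hsmooth := IsTwoUniversal.avg_sum_abs_fiberMass_add_sub_le huniv hw hv
  rw [hwv, hP1, hv_sum] at hsmooth
  calc 1 / (Fintype.card F : ℝ) * ∑ f, Δ f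
      = 1 / Fintype.card F * ∑ f, ∑ s, |fiberMass (h f) P s - 1 / Fintype.card S| := by
        simp only [hΔ, fiberMass]
    _ ≤ √(Fintype.card S * ∑ r, w r ^ 2) + 2 * ∑ r ∈ B, P r := hsmooth
    _ ≤ √(Fintype.card S * 2 ^ (-α)) + 2 * ∑ r ∈ B, P r := by gcongr

/-- Leftover hash lemma with smoothing: for a two-universal family `h : F → (R → S)`
and a distribution `P` on `R`,
`E_F[Δ_F] ≤ √(|S|·2^{-α}) + 2 P({r | P r > 2^{-α}})`, where
`Δ_f = ∑_s |P(f⁻¹(s)) - 1/|S||`. -/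
theorem stmt5 {F R S : Type*} [Fintype F] [Nonempty F] [Fintype R] [Fintype S]
    [Nonempty S] [DecidableEq S]
    (h : F → R → S)
    (huniv : ∀ r r' : R, r ≠ r' →
      (({f : F | h f r = h f r'} : Finset F).card : ℝ) / (Fintype.card F : ℝ)
        ≤ 1 / (Fintype.card S : ℝ))
    (P : R → ℝ) (hP0 : ∀ r, 0 ≤ P r) (hP1 : ∑ r, P r = 1)
    (α : ℝ) (hα : 0 < α)
    (B : Finset R) (hB : ∀ r, r ∈ B ↔ 2 ^ (-α) < P r)
    (Δ : F → ℝ)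
    (hΔ : ∀ f, Δ f = ∑ s : S,
      |(∑ r ∈ {r : R | h f r = s}, P r) - 1 / (Fintype.card S : ℝ)|) :
    (1 / (Fintype.card F : ℝ)) * ∑ f : F, Δ f
      ≤ Real.sqrt ((Fintype.card S : ℝ) * 2 ^ (-α)) + 2 * ∑ r ∈ B, P r :=
  stmt5_general h huniv P hP0 hP1 α B hB Δ hΔ
end

section
/- Let $\mathcal{F}$ be a two-universal hash family of functions $f : \mathcal{R} \to \mathcal{S}$ and $\mu$ a distribution on $\mathcal{R} \times \mathcal{M}$ (finite sets), and $A \subseteq \mathcal{R}$. Then $\mathbb{E}_F\Big[\sum_{s,m}\big(\mu((F^{-1}(s)\cap A)\times\{m\}) - \tfrac{1}{|\mathcal{S}|}\mu(A\times\{m\})\big)^2\Big] \le \sum_{m}\sum_{r \in A} \mu(\{(r,m)\})^2$. -/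
open Finset Real

/-- Second-moment step of the leftover hash lemma: for a two-universal family
`h : F → (R → S)` and a joint distribution `μ` on `R × M`, the expected squared
ℓ₂ deviation on the good set `A` is bounded by the diagonal sum of squared
probabilities. -/
theorem stmt16 {F R S M : Type*} [Fintype F] [Nonempty F] [Fintype R]
    [Fintype S] [Nonempty S] [DecidableEq S] [Fintype M]
    (h : F → R → S)
    (huniv : ∀ r r' : R, r ≠ r' →
      (({f : F | h f r = h f r'} : Finset F).card : ℝ) / (Fintype.card F : ℝ)
        ≤ 1 / (Fintype.card S : ℝ))
    (μ : R × M → ℝ) (hμ0 : ∀ p, 0 ≤ μ p) (hμ1 : ∑ p, μ p = 1)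
    (A : Finset R) :
    (1 / (Fintype.card F : ℝ)) * ∑ f : F, ∑ s : S, ∑ m : M,
        ((∑ r ∈ {r ∈ A | h f r = s}, μ (r, m)) -
          (1 / (Fintype.card S : ℝ)) * ∑ r ∈ A, μ (r, m)) ^ 2
      ≤ ∑ m : M, ∑ r ∈ A, (μ (r, m)) ^ 2 := by
  classical
  set cS : ℝ := (Fintype.card S : ℝ) with hcS
  set cF : ℝ := (Fintype.card F : ℝ) with hcF
  have hS : (0:ℝ) < cS := by rw [hcS]; exact_mod_cast Fintype.card_pos
  have hF : (0:ℝ) < cF := by rw [hcF]; exact_mod_cast Fintype.card_pos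
  have expand : ∀ (f : F) (m : M),
      (∑ s : S, ((∑ r ∈ {r ∈ A | h f r = s}, μ (r, m)) -
          (1 / cS) * ∑ r ∈ A, μ (r, m)) ^ 2)
      = (∑ r ∈ A, ∑ r' ∈ A, if h f r = h f r' then μ (r, m) * μ (r', m) else 0)
        - (∑ r ∈ A, μ (r, m)) ^ 2 / cS := by
    intro f m
    have h1 : ∀ s : S, (∑ r ∈ {r ∈ A | h f r = s}, μ (r, m))
        = ∑ r ∈ A, if h f r = s then μ (r, m) else 0 := fun s => Finset.sum_filter _ _
    have hsum : (∑ s : S, ∑ r ∈ A, if h f r = s then μ (r, m) else 0)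
        = ∑ r ∈ A, μ (r, m) := by
      rw [Finset.sum_comm]
      exact Finset.sum_congr rfl fun r _ => by simp
    have hsq : (∑ s : S, (∑ r ∈ A, if h f r = s then μ (r, m) else 0) ^ 2)
        = ∑ r ∈ A, ∑ r' ∈ A, if h f r = h f r' then μ (r, m) * μ (r', m) else 0 := by
      simp only [sq, Finset.sum_mul_sum]
      rw [Finset.sum_comm]
      refine Finset.sum_congr rfl fun r _ => ?_
      rw [Finset.sum_comm]
      refine Finset.sum_congr rfl fun r' _ => ?_
      simp only [ite_mul, mul_ite, zero_mul, mul_zero]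
      rw [Finset.sum_ite_eq]
      simp only [Finset.mem_univ, if_true]
    simp only [h1]
    have hpt : ∀ s : S, ((∑ r ∈ A, if h f r = s then μ (r, m) else 0) -
        (1 / cS) * ∑ r ∈ A, μ (r, m)) ^ 2
        = (∑ r ∈ A, if h f r = s then μ (r, m) else 0) ^ 2
          - (2 * ((1 / cS) * ∑ r ∈ A, μ (r, m))) * (∑ r ∈ A, if h f r = s then μ (r, m) else 0)
          + ((1 / cS) * ∑ r ∈ A, μ (r, m)) ^ 2 := fun s => by ring
    simp only [hpt]
    rw [Finset.sum_add_distrib, Finset.sum_sub_distrib, hsq, ← Finset.mul_sum, hsum,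
        Finset.sum_const, Finset.card_univ, nsmul_eq_mul, ← hcS]
    field_simp
    ring
  have key : (1 / cF) * (∑ f : F, ∑ s : S, ∑ m : M,
        ((∑ r ∈ {r ∈ A | h f r = s}, μ (r, m)) - (1 / cS) * ∑ r ∈ A, μ (r, m)) ^ 2)
      = ∑ m : M, ((1 / cF) * ∑ f : F,
          (∑ r ∈ A, ∑ r' ∈ A, if h f r = h f r' then μ (r, m) * μ (r', m) else 0)
          - (∑ r ∈ A, μ (r, m)) ^ 2 / cS) := by
    have h2 : ∀ f : F, (∑ s : S, ∑ m : M,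
        ((∑ r ∈ {r ∈ A | h f r = s}, μ (r, m)) - (1 / cS) * ∑ r ∈ A, μ (r, m)) ^ 2)
        = ∑ m : M, ((∑ r ∈ A, ∑ r' ∈ A, if h f r = h f r' then μ (r, m) * μ (r', m) else 0)
          - (∑ r ∈ A, μ (r, m)) ^ 2 / cS) := by
      intro f
      rw [Finset.sum_comm]
      exact Finset.sum_congr rfl fun m _ => expand f m
    simp only [h2]
    rw [Finset.sum_comm, Finset.mul_sum]
    refine Finset.sum_congr rfl fun m _ => ?_
    rw [Finset.sum_sub_distrib, Finset.sum_const, Finset.card_univ, nsmul_eq_mul, ← hcF]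
    field_simp
  rw [key]
  refine Finset.sum_le_sum fun m _ => ?_
  have hDf : (∑ f : F, ∑ r ∈ A, ∑ r' ∈ A, if h f r = h f r' then μ (r, m) * μ (r', m) else 0)
      = ∑ r ∈ A, ∑ r' ∈ A,
          (({f : F | h f r = h f r'} : Finset F).card : ℝ) * (μ (r, m) * μ (r', m)) := by
    rw [Finset.sum_comm]
    refine Finset.sum_congr rfl fun r _ => ?_
    rw [Finset.sum_comm]
    refine Finset.sum_congr rfl fun r' _ => ?_
    rw [← Finset.sum_filter, Finset.sum_const, nsmul_eq_mul]
  have hstep : (1 / cF) * (∑ f : F, ∑ r ∈ A, ∑ r' ∈ A,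
        if h f r = h f r' then μ (r, m) * μ (r', m) else 0)
      ≤ ∑ r ∈ A, ∑ r' ∈ A, (μ (r, m) * μ (r', m)) * (if r = r' then 1 else 1 / cS) := by
    rw [hDf, Finset.mul_sum]
    refine Finset.sum_le_sum fun r _ => ?_
    rw [Finset.mul_sum]
    refine Finset.sum_le_sum fun r' _ => ?_
    have hμμ : 0 ≤ μ (r, m) * μ (r', m) := mul_nonneg (hμ0 _) (hμ0 _)
    by_cases hrr : r = r'
    · rw [if_pos hrr]
      have hN : (({f : F | h f r = h f r'} : Finset F).card : ℝ) / cF ≤ 1 := by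
        rw [div_le_one hF, hcF]
        exact_mod_cast Finset.card_le_univ _
      have e1 : (1 / cF) * ((({f : F | h f r = h f r'} : Finset F).card : ℝ) * (μ (r, m) * μ (r', m)))
          = ((({f : F | h f r = h f r'} : Finset F).card : ℝ) / cF) * (μ (r, m) * μ (r', m)) := by
        ring
      rw [e1]
      calc _ ≤ 1 * (μ (r, m) * μ (r', m)) := mul_le_mul_of_nonneg_right hN hμμ
        _ = (μ (r, m) * μ (r', m)) * 1 := by ring
    · rw [if_neg hrr]
      have hN := huniv r r' hrr
      have e1 : (1 / cF) * ((({f : F | h f r = h f r'} : Finset F).card : ℝ) * (μ (r, m) * μ (r', m)))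
          = ((({f : F | h f r = h f r'} : Finset F).card : ℝ) / cF) * (μ (r, m) * μ (r', m)) := by
        ring
      rw [e1]
      calc _ ≤ (1 / cS) * (μ (r, m) * μ (r', m)) := mul_le_mul_of_nonneg_right hN hμμ
        _ = (μ (r, m) * μ (r', m)) * (1 / cS) := by ring
  have hw : (∑ r ∈ A, ∑ r' ∈ A, (μ (r, m) * μ (r', m)) * (if r = r' then 1 else 1 / cS))
      = (1 / cS) * (∑ r ∈ A, μ (r, m)) ^ 2 + (1 - 1 / cS) * ∑ r ∈ A, μ (r, m) ^ 2 := by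
    have hpt : ∀ r ∈ A, ∀ r' ∈ A, (μ (r, m) * μ (r', m)) * (if r = r' then 1 else 1 / cS)
        = (1 / cS) * (μ (r, m) * μ (r', m))
          + (if r = r' then (1 - 1 / cS) * (μ (r, m) * μ (r', m)) else 0) := by
      intro r _ r' _
      by_cases hrr : r = r' <;> simp [hrr] <;> ring
    rw [Finset.sum_congr rfl fun r hr => Finset.sum_congr rfl fun r' hr' => hpt r hr r' hr']
    rw [Finset.sum_congr rfl fun r (hr : r ∈ A) => Finset.sum_add_distrib]
    rw [Finset.sum_add_distrib]
    congr 1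
    · rw [sq, Finset.sum_mul_sum, Finset.mul_sum]
      exact Finset.sum_congr rfl fun r _ => (Finset.mul_sum _ _ _).symm
    · rw [Finset.mul_sum]
      refine Finset.sum_congr rfl fun r hr => ?_
      rw [Finset.sum_ite_eq, if_pos hr, sq]
  have h0 : 0 ≤ ∑ r ∈ A, μ (r, m) ^ 2 := Finset.sum_nonneg fun r _ => sq_nonneg _
  have h1 : 0 ≤ (1 / cS) * ∑ r ∈ A, μ (r, m) ^ 2 := by positivity
  have e2 : (1 / cS) * (∑ r ∈ A, μ (r, m)) ^ 2 = (∑ r ∈ A, μ (r, m)) ^ 2 / cS := by ring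
  have e3 : (1 - 1 / cS) * (∑ r ∈ A, μ (r, m) ^ 2)
      = (∑ r ∈ A, μ (r, m) ^ 2) - (1 / cS) * ∑ r ∈ A, μ (r, m) ^ 2 := by ring
  linarith [hstep, hw]
end
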